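/- arXiv:1605.05109 — 3 statements merged into one kernel-verified Lean document; each statement's English description precedes it below -/
import Mathlib

section
/- In the diameter gadget graph D_k, for every pair of vertices u, v not belonging to L ∪ R, one has d(u, v) ≤ 3. -/
/-!
Statement 1: In the diameter gadget graph `D_k`, for every pair of vertices
`u, v` not belonging to `L ∪ R`, one has `d(u, v) ≤ 3`.
-/


namespace DiamGadget

/-- Vertices of the diameter gadget graph `D_k`, `k = 2^m`. -/
inductive V (m : ℕ) : Type
  | L : Fin (2 ^ m) → V m
  | R : Fin (2 ^ m) → V m
  | lk : V m
  | lk1 : V m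
  | rk : V m
  | rk1 : V m
  | F : Fin m → V m
  | T : Fin m → V m
  | F' : Fin m → V m
  | T' : Fin m → V m
  | a : V m
  | b : V m

open V

/-- One direction of the edge relation of `D_k`. -/
def rel (m : ℕ) : V m → V m → Prop
  | L _, lk => True
  | R _, rk => True
  | lk, lk1 => True
  | rk, rk1 => True
  | lk1, rk1 => True
  | F j, T' j' => j = j'
  | T j, F' j' => j = j'
  | L i, F j => Nat.testBit i.val j.val = false
  | L i, T j => Nat.testBit i.val j.val = true
  | R i, F' j => Nat.testBit i.val j.val = false
  | R i, T' j => Nat.testBit i.val j.val = true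
  | a, F _ => True
  | a, T _ => True
  | a, lk => True
  | a, lk1 => True
  | b, F' _ => True
  | b, T' _ => True
  | b, rk => True
  | b, rk1 => True
  | a, b => True
  | _, _ => False

/-- The diameter gadget graph `D_k`. -/
def G (m : ℕ) : SimpleGraph (V m) := SimpleGraph.fromRel (rel m)

/-- Membership in `L ∪ R`. -/
def inLR {m : ℕ} : V m → Prop
  | L _ => True
  | R _ => True
  | _ => False


lemma adj_of_rel {m : ℕ} {x y : V m} (h : x ≠ y) (hr : rel m x y) : (G m).Adj x y := by
  simp only [G, SimpleGraph.fromRel_adj]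
  exact ⟨h, Or.inl hr⟩

open SimpleGraph in
lemma hub (m : ℕ) (u : V m) (hu : ¬ inLR u) :
    (∃ w : (G m).Walk u a, w.length ≤ 1) ∨ (∃ w : (G m).Walk u b, w.length ≤ 1) := by
  cases u with
  | L i => simp [inLR] at hu
  | R i => simp [inLR] at hu
  | lk => exact Or.inl ⟨Walk.cons ((adj_of_rel (by simp) (by trivial)).symm) Walk.nil, by simp⟩
  | lk1 => exact Or.inl ⟨Walk.cons ((adj_of_rel (by simp) (by trivial)).symm) Walk.nil, by simp⟩
  | rk => exact Or.inr ⟨Walk.cons ((adj_of_rel (by simp) (by trivial)).symm) Walk.nil, by simp⟩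
  | rk1 => exact Or.inr ⟨Walk.cons ((adj_of_rel (by simp) (by trivial)).symm) Walk.nil, by simp⟩
  | F j => exact Or.inl ⟨Walk.cons ((adj_of_rel (by simp) (by trivial)).symm) Walk.nil, by simp⟩
  | T j => exact Or.inl ⟨Walk.cons ((adj_of_rel (by simp) (by trivial)).symm) Walk.nil, by simp⟩
  | F' j => exact Or.inr ⟨Walk.cons ((adj_of_rel (by simp) (by trivial)).symm) Walk.nil, by simp⟩
  | T' j => exact Or.inr ⟨Walk.cons ((adj_of_rel (by simp) (by trivial)).symm) Walk.nil, by simp⟩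
  | a => exact Or.inl ⟨Walk.nil, by simp⟩
  | b => exact Or.inr ⟨Walk.nil, by simp⟩

theorem statement1 (m : ℕ) (hm : 1 ≤ m) :
    ∀ u v : V m, ¬ inLR u → ¬ inLR v → (G m).dist u v ≤ 3 := by
  intro u v hu hv
  have hab : (G m).Adj a b := adj_of_rel (by simp) (by trivial)
  have hu' := hub m u hu
  have hv' := hub m v hv
  rcases hu' with ⟨wu, hwu⟩ | ⟨wu, hwu⟩ <;> rcases hv' with ⟨wv, hwv⟩ | ⟨wv, hwv⟩
  · calc (G m).dist u v ≤ (wu.append wv.reverse).length := SimpleGraph.dist_le _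
      _ ≤ 3 := by simp [SimpleGraph.Walk.length_append]; omega
  · calc (G m).dist u v ≤ (wu.append (SimpleGraph.Walk.cons hab wv.reverse)).length :=
        SimpleGraph.dist_le _
      _ ≤ 3 := by simp [SimpleGraph.Walk.length_append]; omega
  · calc (G m).dist u v ≤ (wu.append (SimpleGraph.Walk.cons hab.symm wv.reverse)).length :=
        SimpleGraph.dist_le _
      _ ≤ 3 := by simp [SimpleGraph.Walk.length_append]; omega
  · calc (G m).dist u v ≤ (wu.append wv.reverse).length := SimpleGraph.dist_le _
      _ ≤ 3 := by simp [SimpleGraph.Walk.length_append]; omega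

end DiamGadget
end

section
/- In the stretched diameter graph A_{k,P}, for all 0 ≤ i, j ≤ k−1 with i ≠ j one has d(ℓ′_i, r′_j) = 4P + 1, and for all 0 ≤ i ≤ k−1 one has d(ℓ′_i, r′_i) = 6P + 1. -/
/-!
Upper bounds come from explicit walks through the hubs.  For `i ≠ j` pick a bit `b` where
`i` and `j` differ; then `ℓ'_i – ℓ_i – (f_b or t_b) – (t'_b or f'_b) – r_j – r'_j` has length
`4P + 1`.  For `i = j` the route `ℓ'_i – ℓ_i – ℓ_k – ℓ_{k+1} – r_{k+1} – r_k – r_i – r'_i` has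
length `6P + 1`.

For the lower bounds we write down the distances from `ℓ'_i` (for `i ≠ j`: from the whole set
`{ℓ'_0, …, ℓ'_{k-1}}`) to every hub and only check that these numbers change by at most `len s`
along every segment `s`.  Interpolated along the segments, such a potential is 1-Lipschitz on the
whole graph, so its value at `r'_j` bounds `d(ℓ'_i, r'_j)` from below.
-/

/-- Generic graph built from "hub" vertices and "segments": each segment `s`
is a path with `len s` edges between the two hubs `ends s`, whose
`len s - 1` internal vertices are the pairs `⟨s, t⟩`.  A segment of length 1
is just an edge between its two endpoints. -/
def segGraph {Hub Seg : Type} (ends : Seg → Hub × Hub) (len : Seg → ℕ) :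
    SimpleGraph (Hub ⊕ (s : Seg) × Fin (len s - 1)) :=
  SimpleGraph.fromRel fun u v =>
    match u, v with
    | Sum.inl x, Sum.inl y => ∃ s, len s = 1 ∧ ends s = (x, y)
    | Sum.inl x, Sum.inr ⟨s, t⟩ =>
        ((ends s).1 = x ∧ (t : ℕ) = 0) ∨ ((ends s).2 = x ∧ (t : ℕ) + 2 = len s)
    | Sum.inr ⟨s, t⟩, Sum.inl x =>
        ((ends s).1 = x ∧ (t : ℕ) = 0) ∨ ((ends s).2 = x ∧ (t : ℕ) + 2 = len s)
    | Sum.inr ⟨s, t⟩, Sum.inr ⟨s', t'⟩ =>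
        s = s' ∧ ((t : ℕ) + 1 = (t' : ℕ) ∨ (t' : ℕ) + 1 = (t : ℕ))

namespace StretchDiam

/-- Hub (distinguished) vertices of the stretched diameter graph `A_{k,P}`. -/
inductive Hub (m : ℕ) : Type
  | L : Fin (2 ^ m) → Hub m
  | L' : Fin (2 ^ m) → Hub m
  | R : Fin (2 ^ m) → Hub m
  | R' : Fin (2 ^ m) → Hub m
  | lk : Hub m
  | lk1 : Hub m
  | rk : Hub m
  | rk1 : Hub m
  | F : Fin m → Hub m
  | T : Fin m → Hub m
  | F' : Fin m → Hub m
  | T' : Fin m → Hub m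

/-- Segments (paths between hubs) of `A_{k,P}`. -/
inductive Seg (m : ℕ) : Type
  | Llk : Fin (2 ^ m) → Seg m            -- ℓ_i – ℓ_k, length P
  | Rrk : Fin (2 ^ m) → Seg m            -- r_i – r_k, length P
  | lklk1 : Seg m                        -- ℓ_k – ℓ_{k+1}, length P
  | rkrk1 : Seg m                        -- r_k – r_{k+1}, length P
  | lk1rk1 : Seg m                       -- edge ℓ_{k+1} – r_{k+1}
  | Lbit : Fin (2 ^ m) → Fin m → Seg m   -- ℓ_i – (f_j or t_j), length P
  | Rbit : Fin (2 ^ m) → Fin m → Seg m   -- r_i – (f'_j or t'_j), length P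
  | FT' : Fin m → Seg m                  -- edge f_j – t'_j
  | TF' : Fin m → Seg m                  -- edge t_j – f'_j
  | Flk1 : Fin m → Seg m                 -- f_j – ℓ_{k+1}, length P
  | Tlk1 : Fin m → Seg m                 -- t_j – ℓ_{k+1}, length P
  | F'rk1 : Fin m → Seg m                -- f'_j – r_{k+1}, length P
  | T'rk1 : Fin m → Seg m                -- t'_j – r_{k+1}, length P
  | L'L : Fin (2 ^ m) → Seg m            -- ℓ'_i – ℓ_i, length P
  | R'R : Fin (2 ^ m) → Seg m            -- r'_i – r_i, length P

open Hub Seg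

/-- Endpoints of each segment. -/
def ends (m : ℕ) : Seg m → Hub m × Hub m
  | Llk i => (L i, lk)
  | Rrk i => (R i, rk)
  | lklk1 => (lk, lk1)
  | rkrk1 => (rk, rk1)
  | lk1rk1 => (lk1, rk1)
  | Lbit i j => (L i, if Nat.testBit i.val j.val then T j else F j)
  | Rbit i j => (R i, if Nat.testBit i.val j.val then T' j else F' j)
  | FT' j => (F j, T' j)
  | TF' j => (T j, F' j)
  | Flk1 j => (F j, lk1)
  | Tlk1 j => (T j, lk1)
  | F'rk1 j => (F' j, rk1)
  | T'rk1 j => (T' j, rk1)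
  | L'L i => (L' i, L i)
  | R'R i => (R' i, R i)

/-- Length of each segment: the three special edges have length 1, all other
segments are paths of length `P`. -/
def len (m P : ℕ) : Seg m → ℕ
  | lk1rk1 => 1
  | FT' _ => 1
  | TF' _ => 1
  | _ => P

/-- Vertices of `A_{k,P}`: hubs together with internal path vertices. -/
abbrev V (m P : ℕ) : Type := Hub m ⊕ (s : Seg m) × Fin (len m P s - 1)

/-- The stretched diameter graph `A_{k,P}`. -/
def A (m P : ℕ) : SimpleGraph (V m P) := segGraph (ends m) (len m P)

end StretchDiam

lemma Fin.exists_testBit_ne_of_ne {m : ℕ} {i j : Fin (2 ^ m)} (h : i ≠ j) :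
    ∃ b : Fin m, i.val.testBit b ≠ j.val.testBit b := by
  obtain ⟨b, hb⟩ := Nat.exists_testBit_ne_of_ne (Fin.val_ne_of_ne h)
  refine ⟨⟨b, ?_⟩, hb⟩
  by_contra! hmb
  have hpow := Nat.pow_le_pow_right two_pos hmb
  exact hb <| by
    rw [Nat.testBit_lt_two_pow (i.isLt.trans_le hpow),
      Nat.testBit_lt_two_pow (j.isLt.trans_le hpow)]

namespace SimpleGraph

variable {V : Type*} {G : SimpleGraph V} {u v w : V}

lemma Adj.edist_le_one (h : G.Adj u v) : G.edist u v ≤ 1 :=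
  edist_le_one_iff_adj_or_eq.mpr (Or.inl h)

lemma edist_le_add_of_le {m n : ℕ∞} (huv : G.edist u v ≤ m) (hvw : G.edist v w ≤ n) :
    G.edist u w ≤ m + n :=
  G.edist_triangle.trans (add_le_add huv hvw)

lemma le_add_length_of_adj_le (h : V → ℕ) (hh : ∀ u v, G.Adj u v → h v ≤ h u + 1)
    (p : G.Walk u v) : h v ≤ h u + p.length := by
  induction p with
  | nil => simp
  | cons hadj _ ih =>
    have := hh _ _ hadj
    rw [Walk.length_cons]
    omega

lemma le_add_edist_of_adj_le (h : V → ℕ) (hh : ∀ u v, G.Adj u v → h v ≤ h u + 1) (u v : V) :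
    (h v : ℕ∞) ≤ h u + G.edist u v := by
  by_cases hr : G.Reachable u v
  · obtain ⟨p, hp⟩ := hr.exists_walk_length_eq_edist
    rw [← hp]
    exact_mod_cast le_add_length_of_adj_le h hh p
  · simp [edist_eq_top_of_not_reachable hr]

lemma dist_eq_of_edist_eq {n : ℕ} (h : G.edist u v = n) : G.dist u v = n := by
  rw [dist, h, ENat.toNat_natCast]

end SimpleGraph

namespace segGraph

variable {Hub Seg : Type} {ends : Seg → Hub × Hub} {len : Seg → ℕ}

lemma edist_le_len (s : Seg) (hs : 1 ≤ len s) (hne : (ends s).1 ≠ (ends s).2) :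
    (segGraph ends len).edist (Sum.inl (ends s).1) (Sum.inl (ends s).2) ≤ len s := by
  rcases hs.eq_or_lt with h1 | h1
  · rw [← h1]
    apply SimpleGraph.Adj.edist_le_one
    rw [segGraph, SimpleGraph.fromRel_adj]
    exact ⟨by simpa using hne, Or.inl ⟨s, h1.symm, rfl⟩⟩
  have interior : ∀ t (ht : t < len s - 1),
      (segGraph ends len).edist (Sum.inl (ends s).1) (Sum.inr ⟨s, ⟨t, ht⟩⟩) ≤ (t + 1 : ℕ) := by
    intro t
    induction t with
    | zero =>
      intro ht
      apply SimpleGraph.Adj.edist_le_one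
      rw [segGraph, SimpleGraph.fromRel_adj]
      exact ⟨by simp, Or.inl (Or.inl ⟨rfl, rfl⟩)⟩
    | succ t ih =>
      intro ht
      have hstep : (segGraph ends len).Adj (Sum.inr ⟨s, ⟨t, by omega⟩⟩)
          (Sum.inr ⟨s, ⟨t + 1, ht⟩⟩) := by
        rw [segGraph, SimpleGraph.fromRel_adj]
        exact ⟨by simp, Or.inl ⟨rfl, Or.inl rfl⟩⟩
      exact_mod_cast SimpleGraph.edist_le_add_of_le (ih _) hstep.edist_le_one
  have hlast : (segGraph ends len).Adj (Sum.inr ⟨s, ⟨len s - 2, by omega⟩⟩)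
      (Sum.inl (ends s).2) := by
    rw [segGraph, SimpleGraph.fromRel_adj]
    exact ⟨by simp, Or.inl (Or.inr ⟨rfl, by simp only; omega⟩)⟩
  calc _ ≤ ((len s - 2 + 1 : ℕ) : ℕ∞) + 1 :=
        SimpleGraph.edist_le_add_of_le (interior _ _) hlast.edist_le_one
    _ = len s := by norm_cast; omega

def IsPotential (ends : Seg → Hub × Hub) (len : Seg → ℕ) (H : Hub → ℕ) : Prop :=
  ∀ s, H (ends s).1 ≤ H (ends s).2 + len s ∧ H (ends s).2 ≤ H (ends s).1 + len s

/-- `⟨s, t⟩` lies `t + 1` steps from `(ends s).1` and `len s - (t + 1)` steps from `(ends s).2`. -/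
def interpolate (ends : Seg → Hub × Hub) (len : Seg → ℕ) (H : Hub → ℕ) :
    Hub ⊕ (s : Seg) × Fin (len s - 1) → ℕ
  | Sum.inl x => H x
  | Sum.inr ⟨s, t⟩ => min (H (ends s).1 + (t + 1)) (H (ends s).2 + (len s - (t + 1)))

lemma interpolate_adj_le {H : Hub → ℕ} (hH : IsPotential ends len H)
    {u v : Hub ⊕ (s : Seg) × Fin (len s - 1)} (huv : (segGraph ends len).Adj u v) :
    interpolate ends len H v ≤ interpolate ends len H u + 1 := by
  rw [segGraph, SimpleGraph.fromRel_adj] at huv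
  rcases u with x | ⟨s, t⟩ <;> rcases v with y | ⟨s', t'⟩ <;> simp only [interpolate] at huv ⊢
  · obtain ⟨-, ⟨s, hs, he⟩ | ⟨s, hs, he⟩⟩ := huv <;>
    · have := hH s
      simp only [he] at this
      omega
  · have := hH s'
    have := t'.isLt
    obtain ⟨-, (⟨rfl, _⟩ | ⟨rfl, _⟩) | (⟨rfl, _⟩ | ⟨rfl, _⟩)⟩ := huv <;> omega
  · have := hH s
    have := t.isLt
    obtain ⟨-, (⟨rfl, _⟩ | ⟨rfl, _⟩) | (⟨rfl, _⟩ | ⟨rfl, _⟩)⟩ := huv <;> omega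
  · have := hH s
    have := t.isLt
    have := t'.isLt
    obtain ⟨-, ⟨rfl, _⟩ | ⟨rfl, _⟩⟩ := huv <;> omega

lemma le_add_edist {H : Hub → ℕ} (hH : IsPotential ends len H) (x y : Hub) :
    (H y : ℕ∞) ≤ H x + (segGraph ends len).edist (Sum.inl x) (Sum.inl y) :=
  SimpleGraph.le_add_edist_of_adj_le (interpolate ends len H)
    (fun _ _ => interpolate_adj_le hH) _ _

lemma dist_eq_of_isPotential {H : Hub → ℕ} (hH : IsPotential ends len H) {x y : Hub} {n : ℕ}
    (hx : H x = 0) (hy : H y = n)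
    (hle : (segGraph ends len).edist (Sum.inl x) (Sum.inl y) ≤ n) :
    (segGraph ends len).dist (Sum.inl x) (Sum.inl y) = n := by
  refine SimpleGraph.dist_eq_of_edist_eq (hle.antisymm ?_)
  simpa [hx, hy] using le_add_edist hH x y

end segGraph

namespace StretchDiam

open Hub Seg

variable {m P : ℕ}

lemma ends_fst_ne_snd (s : Seg m) : (ends m s).1 ≠ (ends m s).2 := by
  cases s <;> simp only [ends] <;> (try split) <;> simp

lemma edist_ends_le (hP : 1 ≤ P) (s : Seg m) :
    (A m P).edist (Sum.inl (ends m s).1) (Sum.inl (ends m s).2) ≤ len m P s :=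
  segGraph.edist_le_len s (by cases s <;> simp [len, hP]) (ends_fst_ne_snd s)

lemma edist_ends_le' (hP : 1 ≤ P) (s : Seg m) :
    (A m P).edist (Sum.inl (ends m s).2) (Sum.inl (ends m s).1) ≤ len m P s :=
  (A m P).edist_comm.trans_le (edist_ends_le hP s)

lemma edist_bridge_le (b : Fin m) (c : Bool) :
    (A m P).edist (Sum.inl (if c then T b else F b)) (Sum.inl (if !c then T' b else F' b)) ≤ 1 := by
  cases c
  · exact segGraph.edist_le_len (FT' b) le_rfl (ends_fst_ne_snd _)
  · exact segGraph.edist_le_len (TF' b) le_rfl (ends_fst_ne_snd _)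

lemma edist_L'_R'_le (hP : 1 ≤ P) {i j : Fin (2 ^ m)} {b : Fin m}
    (hb : i.val.testBit b ≠ j.val.testBit b) :
    (A m P).edist (Sum.inl (L' i)) (Sum.inl (R' j)) ≤ 4 * P + 1 := by
  have hR := edist_ends_le' hP (Rbit j b)
  simp only [ends, Bool.eq_not.mpr hb.symm] at hR
  have := SimpleGraph.edist_le_add_of_le (edist_ends_le hP (L'L i)) <|
    SimpleGraph.edist_le_add_of_le (edist_ends_le hP (Lbit i b)) <|
    SimpleGraph.edist_le_add_of_le (edist_bridge_le b _) <|
    SimpleGraph.edist_le_add_of_le hR (edist_ends_le' hP (R'R j))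
  refine this.trans_eq ?_
  change (P : ℕ∞) + (P + (1 + (P + P))) = 4 * P + 1
  ring

lemma edist_L'_R'_self_le (hP : 1 ≤ P) (i : Fin (2 ^ m)) :
    (A m P).edist (Sum.inl (L' i)) (Sum.inl (R' i)) ≤ 6 * P + 1 := by
  have := SimpleGraph.edist_le_add_of_le (edist_ends_le hP (L'L i)) <|
    SimpleGraph.edist_le_add_of_le (edist_ends_le hP (Llk i)) <|
    SimpleGraph.edist_le_add_of_le (edist_ends_le hP lklk1) <|
    SimpleGraph.edist_le_add_of_le (edist_ends_le hP lk1rk1) <|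
    SimpleGraph.edist_le_add_of_le (edist_ends_le' hP rkrk1) <|
    SimpleGraph.edist_le_add_of_le (edist_ends_le' hP (Rrk i)) (edist_ends_le' hP (R'R i))
  refine this.trans_eq ?_
  change (P : ℕ∞) + (P + (P + (1 + (P + (P + P))))) = 6 * P + 1
  ring

def offDiagPotential (P : ℕ) : Hub m → ℕ
  | L _ => P
  | L' _ => 0
  | R _ => 3 * P + 1
  | R' _ => 4 * P + 1
  | lk => 2 * P
  | lk1 => 3 * P
  | rk => 4 * P + 1
  | rk1 => 3 * P + 1
  | F _ => 2 * P
  | T _ => 2 * P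
  | F' _ => 2 * P + 1
  | T' _ => 2 * P + 1

lemma isPotential_offDiagPotential :
    segGraph.IsPotential (ends m) (len m P) (offDiagPotential P) := by
  intro s
  cases s <;> simp only [ends, len] <;> (try split) <;> simp only [offDiagPotential] <;> omega

def diagPotential (P : ℕ) (i : Fin (2 ^ m)) : Hub m → ℕ
  | L i' => if i' = i then P else 3 * P
  | L' i' => if i' = i then 0 else 4 * P
  | R i' => if i' = i then 5 * P + 1 else 3 * P + 1
  | R' i' => if i' = i then 6 * P + 1 else 4 * P + 1
  | lk => 2 * P
  | lk1 => 3 * P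
  | rk => 4 * P + 1
  | rk1 => 3 * P + 1
  | F b => if i.val.testBit b then 4 * P else 2 * P
  | T b => if i.val.testBit b then 2 * P else 4 * P
  | F' b => if i.val.testBit b then 2 * P + 1 else 4 * P + 1
  | T' b => if i.val.testBit b then 4 * P + 1 else 2 * P + 1

lemma isPotential_diagPotential (i : Fin (2 ^ m)) :
    segGraph.IsPotential (ends m) (len m P) (diagPotential P i) := by
  intro s
  cases s <;> simp only [ends, len] <;> (try split) <;> simp only [diagPotential] <;>
    (try split_ifs) <;> subst_vars <;> (try simp_all) <;> omega

theorem statement6_general (m P : ℕ) (hP : 1 ≤ P) :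
    (∀ i j : Fin (2 ^ m), i ≠ j →
      (A m P).dist (Sum.inl (L' i)) (Sum.inl (R' j)) = 4 * P + 1) ∧
    (∀ i : Fin (2 ^ m),
      (A m P).dist (Sum.inl (L' i)) (Sum.inl (R' i)) = 6 * P + 1) := by
  refine ⟨fun i j hij => ?_, fun i => ?_⟩
  · obtain ⟨b, hb⟩ := Fin.exists_testBit_ne_of_ne hij
    exact segGraph.dist_eq_of_isPotential isPotential_offDiagPotential rfl rfl
      (by exact_mod_cast edist_L'_R'_le hP hb)
  · exact segGraph.dist_eq_of_isPotential (isPotential_diagPotential i)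
      (by simp [diagPotential]) (by simp [diagPotential])
      (by exact_mod_cast edist_L'_R'_self_le hP i)

theorem statement6 (m P : ℕ) (hm : 1 ≤ m) (hP : 1 ≤ P) :
    (∀ i j : Fin (2 ^ m), i ≠ j →
      (A m P).dist (Sum.inl (L' i)) (Sum.inl (R' j)) = 4 * P + 1) ∧
    (∀ i : Fin (2 ^ m),
      (A m P).dist (Sum.inl (L' i)) (Sum.inl (R' i)) = 6 * P + 1) :=
  statement6_general m P hP

end StretchDiam
end

section
/- The radius of the graph R_k(S_a, S_b) (i.e., the minimum over all vertices u of the eccentricity e(u)) equals 3 if and only if there exists an index 0 ≤ i ≤ k−1 with S_a(i) = 1 and S_b(i) = 1; moreover, if no such index exists, then the radius is at least 4. -/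
/-!
Statement 11: The radius of the graph `R_k(S_a, S_b)` (the minimum over all
vertices of the eccentricity) equals 3 iff there exists an index `i` with
`S_a(i) = 1` and `S_b(i) = 1`; moreover, if no such index exists, then the
radius is at least 4.
-/

namespace RadGadget

/-- Vertices of the radius gadget graph `R_k`, `k = 2^m`. -/
inductive V (m : ℕ) : Type
  | L : Fin (2 ^ m) → V m
  | R : Fin (2 ^ m) → V m
  | lk : V m
  | lk1 : V m
  | rk : V m
  | rk1 : V m
  | F : Fin m → V m
  | T : Fin m → V m
  | F' : Fin m → V m
  | T' : Fin m → V m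
  | x1 : V m
  | x2 : V m
  | x3 : V m
  deriving DecidableEq, Fintype

open V

/-- One direction of the edge relation of `R_k`. -/
def rel (m : ℕ) : V m → V m → Prop
  | L _, lk => True
  | R _, rk => True
  | lk, lk1 => True
  | rk, rk1 => True
  | lk1, rk1 => True
  | F j, T' j' => j = j'
  | T j, F' j' => j = j'
  | F j, T j' => j = j'
  | F' j, T' j' => j = j'
  | L i, F j => Nat.testBit i.val j.val = false
  | L i, T j => Nat.testBit i.val j.val = true
  | R i, F' j => Nat.testBit i.val j.val = false
  | R i, T' j => Nat.testBit i.val j.val = true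
  | L _, x1 => True
  | x1, x2 => True
  | x2, x3 => True
  | _, _ => False

/-- The radius gadget graph `R_k`. -/
def G (m : ℕ) : SimpleGraph (V m) := SimpleGraph.fromRel (rel m)

/-- Extra edges depending on the input strings: `ℓ_i–ℓ_{k+1}` when `S_a(i) = 1`
and `r_i–r_{k+1}` when `S_b(i) = 1`. -/
def extraRel (m : ℕ) (Sa Sb : Fin (2 ^ m) → Bool) : V m → V m → Prop
  | L i, lk1 => Sa i = true
  | R i, rk1 => Sb i = true
  | _, _ => False

/-- The graph `R_k(S_a, S_b)`. -/
def GS (m : ℕ) (Sa Sb : Fin (2 ^ m) → Bool) : SimpleGraph (V m) :=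
  G m ⊔ SimpleGraph.fromRel (extraRel m Sa Sb)

instance (m : ℕ) : Nonempty (V m) := ⟨x1⟩

/-- The eccentricity `e(u) = max_v d(u,v)` in `R_k(S_a, S_b)`. -/
noncomputable def ecc (m : ℕ) (Sa Sb : Fin (2 ^ m) → Bool) (u : V m) : ℕ :=
  Finset.univ.sup fun v => (GS m Sa Sb).dist u v

/-- The radius `min_u e(u)` of `R_k(S_a, S_b)`. -/
noncomputable def radius (m : ℕ) (Sa Sb : Fin (2 ^ m) → Bool) : ℕ :=
  Finset.univ.inf' Finset.univ_nonempty fun u => ecc m Sa Sb u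

open V SimpleGraph

section
variable {m : ℕ} {Sa Sb : Fin (2 ^ m) → Bool}

lemma adj_iff {a b : V m} : (GS m Sa Sb).Adj a b ↔
    a ≠ b ∧ (rel m a b ∨ rel m b a ∨ extraRel m Sa Sb a b ∨ extraRel m Sa Sb b a) := by
  simp only [GS, G, SimpleGraph.sup_adj, SimpleGraph.fromRel_adj]
  tauto

lemma adjR {a b : V m} (h : a ≠ b) (hr : rel m a b) : (GS m Sa Sb).Adj a b :=
  adj_iff.mpr ⟨h, Or.inl hr⟩

lemma adjE {a b : V m} (h : a ≠ b) (hr : extraRel m Sa Sb a b) : (GS m Sa Sb).Adj a b :=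
  adj_iff.mpr ⟨h, Or.inr (Or.inr (Or.inl hr))⟩

/-- Walks give Lipschitz bounds. -/
lemma walk_lip (f : V m → ℕ) (hf : ∀ a b : V m, (GS m Sa Sb).Adj a b → f a ≤ f b + 1) :
    ∀ {u v : V m} (p : (GS m Sa Sb).Walk u v), f u ≤ f v + p.length := by
  intro u v p
  induction p with
  | nil => simp
  | cons h p ih =>
    have := hf _ _ h
    simp only [Walk.length_cons]
    omega

lemma dist_lip (f : V m → ℕ) (hf : ∀ a b : V m, (GS m Sa Sb).Adj a b → f a ≤ f b + 1)
    {u v : V m} (hr : (GS m Sa Sb).Reachable u v) :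
    f u ≤ f v + (GS m Sa Sb).dist u v := by
  obtain ⟨p, hp⟩ := hr.exists_walk_length_eq_dist
  rw [← hp]; exact walk_lip f hf p

/-- Connectivity: everything reaches `lk1`. -/
lemma reach_lk1 (u : V m) : (GS m Sa Sb).Reachable u lk1 := by
  have h0 : ∀ j : Fin m, Nat.testBit (0 : Fin (2^m)).val j.val = false := by
    intro j; simp
  have hL : ∀ i : Fin (2^m), (GS m Sa Sb).Reachable (L i) lk1 :=
    fun i => ((adjR (by nofun) trivial : (GS m Sa Sb).Adj (L i) lk).reachable).trans
      (adjR (by nofun) trivial : (GS m Sa Sb).Adj lk lk1).reachable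
  have hF : ∀ j : Fin m, (GS m Sa Sb).Reachable (F j) lk1 := fun j =>
    ((adjR (by nofun) (h0 j) : (GS m Sa Sb).Adj (L 0) (F j)).reachable).symm.trans (hL 0)
  have hrk1 : (GS m Sa Sb).Reachable rk1 lk1 :=
    (adjR (by nofun) trivial : (GS m Sa Sb).Adj lk1 rk1).reachable.symm
  cases u with
  | L i => exact hL i
  | R i =>
      exact ((adjR (by nofun) trivial : (GS m Sa Sb).Adj (R i) rk).reachable).trans
        (((adjR (by nofun) trivial : (GS m Sa Sb).Adj rk rk1).reachable).trans hrk1)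
  | lk => exact (adjR (by nofun) trivial : (GS m Sa Sb).Adj lk lk1).reachable
  | lk1 => exact Reachable.refl _
  | rk => exact ((adjR (by nofun) trivial : (GS m Sa Sb).Adj rk rk1).reachable).trans hrk1
  | rk1 => exact hrk1
  | F j => exact hF j
  | T j => exact ((adjR (by nofun) rfl : (GS m Sa Sb).Adj (F j) (T j)).reachable).symm.trans (hF j)
  | F' j =>
      exact ((adjR (by nofun) rfl : (GS m Sa Sb).Adj (F' j) (T' j)).reachable).trans
        (((adjR (by nofun) rfl : (GS m Sa Sb).Adj (F j) (T' j)).reachable).symm.trans (hF j))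
  | T' j => exact ((adjR (by nofun) rfl : (GS m Sa Sb).Adj (F j) (T' j)).reachable).symm.trans (hF j)
  | x1 => exact ((adjR (by nofun) trivial : (GS m Sa Sb).Adj (L 0) x1).reachable).symm.trans (hL 0)
  | x2 =>
      exact ((adjR (by nofun) trivial : (GS m Sa Sb).Adj x1 x2).reachable).symm.trans
        (((adjR (by nofun) trivial : (GS m Sa Sb).Adj (L 0) x1).reachable).symm.trans (hL 0))
  | x3 =>
      exact ((adjR (by nofun) trivial : (GS m Sa Sb).Adj x2 x3).reachable).symm.trans
        (((adjR (by nofun) trivial : (GS m Sa Sb).Adj x1 x2).reachable).symm.trans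
          (((adjR (by nofun) trivial : (GS m Sa Sb).Adj (L 0) x1).reachable).symm.trans (hL 0)))

lemma reach (u v : V m) : (GS m Sa Sb).Reachable u v :=
  (reach_lk1 u).trans (reach_lk1 v).symm

end

section
variable {m : ℕ} {Sa Sb : Fin (2 ^ m) → Bool}
open V SimpleGraph

/-- Potential toward `x3`. -/
def f1 : V m → ℕ
  | x3 => 0 | x2 => 1 | x1 => 2 | L _ => 3
  | R _ => 4 | lk => 4 | lk1 => 4 | rk => 4 | rk1 => 4
  | F _ => 4 | T _ => 4 | F' _ => 4 | T' _ => 4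

lemma f1_lip : ∀ a b : V m, (GS m Sa Sb).Adj a b → f1 a ≤ f1 b + 1 := by
  intro a b h
  rw [adj_iff] at h
  obtain ⟨-, h⟩ := h
  cases a <;> cases b <;> simp_all [rel, extraRel, f1]

/-- Potential toward `rk`. -/
def f2 : V m → ℕ
  | rk => 0 | rk1 => 1 | R _ => 1 | F' _ => 2 | T' _ => 2 | lk1 => 2
  | F _ => 3 | T _ => 3 | L _ => 3 | lk => 3 | x1 => 4 | x2 => 5 | x3 => 6

lemma f2_lip : ∀ a b : V m, (GS m Sa Sb).Adj a b → f2 a ≤ f2 b + 1 := by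
  intro a b h
  rw [adj_iff] at h
  obtain ⟨-, h⟩ := h
  cases a <;> cases b <;> simp_all [rel, extraRel, f2]

/-- Potential toward `R i`, assuming `¬(Sa i ∧ Sb i)`. -/
def f3 (i : Fin (2 ^ m)) (sb : Bool) : V m → ℕ
  | R j => if j = i then 0 else 2
  | rk => 1
  | rk1 => if sb then 1 else 2
  | F' j => if Nat.testBit i.val j.val then 2 else 1
  | T' j => if Nat.testBit i.val j.val then 1 else 2
  | F j => if Nat.testBit i.val j.val then 2 else 3
  | T j => if Nat.testBit i.val j.val then 3 else 2
  | lk1 => if sb then 2 else 3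
  | lk => 3
  | L j => if j = i then 4 else 3
  | x1 => 4 | x2 => 5 | x3 => 6

lemma f3_lip (i : Fin (2 ^ m)) (hn : ¬(Sa i = true ∧ Sb i = true)) :
    ∀ a b : V m, (GS m Sa Sb).Adj a b → f3 i (Sb i) a ≤ f3 i (Sb i) b + 1 := by
  intro a b h
  rw [adj_iff] at h
  obtain ⟨-, h⟩ := h
  cases a <;> cases b <;>
    simp_all only [rel, extraRel, f3, or_false, false_or, or_self] <;>
    first
      | omega
      | (split_ifs <;> simp_all <;> omega)

end

section
variable {m : ℕ} {Sa Sb : Fin (2 ^ m) → Bool}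
open V SimpleGraph

lemma dist_le1 {u v : V m} (h : (GS m Sa Sb).Adj u v) : (GS m Sa Sb).dist u v ≤ 1 :=
  SimpleGraph.dist_le (Walk.cons h Walk.nil)

lemma dist_le2 {u a v : V m} (h1 : (GS m Sa Sb).Adj u a) (h2 : (GS m Sa Sb).Adj a v) :
    (GS m Sa Sb).dist u v ≤ 2 :=
  SimpleGraph.dist_le (Walk.cons h1 (Walk.cons h2 Walk.nil))

lemma dist_le3 {u a b v : V m} (h1 : (GS m Sa Sb).Adj u a) (h2 : (GS m Sa Sb).Adj a b)
    (h3 : (GS m Sa Sb).Adj b v) : (GS m Sa Sb).dist u v ≤ 3 :=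
  SimpleGraph.dist_le (Walk.cons h1 (Walk.cons h2 (Walk.cons h3 Walk.nil)))

/-- Two distinct numbers below `2^m` differ at some bit below `m`. -/
lemma exists_diff_bit {i j : Fin (2 ^ m)} (h : i ≠ j) :
    ∃ jj : Fin m, Nat.testBit i.val jj.val ≠ Nat.testBit j.val jj.val := by
  by_contra hc
  push_neg at hc
  apply h
  ext
  apply Nat.eq_of_testBit_eq
  intro k
  by_cases hk : k < m
  · exact hc ⟨k, hk⟩
  · rw [Nat.testBit_lt_two_pow, Nat.testBit_lt_two_pow]
    · exact lt_of_lt_of_le j.isLt (Nat.pow_le_pow_right (by norm_num) (le_of_not_gt hk))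
    · exact lt_of_lt_of_le i.isLt (Nat.pow_le_pow_right (by norm_num) (le_of_not_gt hk))

/-- When `Sa i` and `Sb i` hold, every vertex is within distance 3 of `L i`. -/
lemma dist_L_le {i : Fin (2 ^ m)} (ha : Sa i = true) (hb : Sb i = true) (v : V m) :
    (GS m Sa Sb).dist (L i) v ≤ 3 := by
  have alk1 : (GS m Sa Sb).Adj (L i) lk1 := adjE (by nofun) ha
  have ark1 : (GS m Sa Sb).Adj lk1 rk1 := adjR (by nofun) trivial
  cases v with
  | L j =>
      exact le_trans (dist_le2 (adjR (by nofun) trivial : (GS m Sa Sb).Adj (L i) lk) ((adjR (by nofun) trivial :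
        (GS m Sa Sb).Adj (L j) lk).symm)) (by norm_num)
  | R j =>
      by_cases hij : i = j
      · subst hij
        exact dist_le3 alk1 ark1 ((adjE (by nofun) hb : (GS m Sa Sb).Adj (R i) rk1).symm)
      · obtain ⟨jj, hjj⟩ := exists_diff_bit hij
        cases hbit : Nat.testBit i.val jj.val with
        | false =>
            have hj : Nat.testBit j.val jj.val = true := by
              rw [hbit] at hjj; simpa using hjj.symm
            exact dist_le3 (adjR (by nofun) hbit : (GS m Sa Sb).Adj (L i) (F jj))
              (adjR (by nofun) rfl : (GS m Sa Sb).Adj (F jj) (T' jj))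
              ((adjR (by nofun) hj : (GS m Sa Sb).Adj (R j) (T' jj)).symm)
        | true =>
            have hj : Nat.testBit j.val jj.val = false := by
              rw [hbit] at hjj; simpa using hjj.symm
            exact dist_le3 (adjR (by nofun) hbit : (GS m Sa Sb).Adj (L i) (T jj))
              (adjR (by nofun) rfl : (GS m Sa Sb).Adj (T jj) (F' jj))
              ((adjR (by nofun) hj : (GS m Sa Sb).Adj (R j) (F' jj)).symm)
  | lk => exact le_trans (dist_le1 (adjR (by nofun) trivial)) (by norm_num)
  | lk1 => exact le_trans (dist_le1 alk1) (by norm_num)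
  | rk => exact dist_le3 alk1 ark1 ((adjR (by nofun) trivial : (GS m Sa Sb).Adj rk rk1).symm)
  | rk1 => exact le_trans (dist_le2 alk1 ark1) (by norm_num)
  | F j =>
      cases hbit : Nat.testBit i.val j.val with
      | false => exact le_trans (dist_le1 (adjR (by nofun) hbit)) (by norm_num)
      | true =>
          exact le_trans (dist_le2 (adjR (by nofun) hbit : (GS m Sa Sb).Adj (L i) (T j))
            ((adjR (by nofun) rfl : (GS m Sa Sb).Adj (F j) (T j)).symm)) (by norm_num)
  | T j =>
      cases hbit : Nat.testBit i.val j.val with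
      | true => exact le_trans (dist_le1 (adjR (by nofun) hbit)) (by norm_num)
      | false =>
          exact le_trans (dist_le2 (adjR (by nofun) hbit : (GS m Sa Sb).Adj (L i) (F j))
            (adjR (by nofun) rfl : (GS m Sa Sb).Adj (F j) (T j))) (by norm_num)
  | T' j =>
      cases hbit : Nat.testBit i.val j.val with
      | false =>
          exact le_trans (dist_le2 (adjR (by nofun) hbit : (GS m Sa Sb).Adj (L i) (F j))
            (adjR (by nofun) rfl : (GS m Sa Sb).Adj (F j) (T' j))) (by norm_num)
      | true =>
          exact dist_le3 (adjR (by nofun) hbit : (GS m Sa Sb).Adj (L i) (T j))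
            (adjR (by nofun) rfl : (GS m Sa Sb).Adj (T j) (F' j))
            (adjR (by nofun) rfl : (GS m Sa Sb).Adj (F' j) (T' j))
  | F' j =>
      cases hbit : Nat.testBit i.val j.val with
      | true =>
          exact le_trans (dist_le2 (adjR (by nofun) hbit : (GS m Sa Sb).Adj (L i) (T j))
            (adjR (by nofun) rfl : (GS m Sa Sb).Adj (T j) (F' j))) (by norm_num)
      | false =>
          exact dist_le3 (adjR (by nofun) hbit : (GS m Sa Sb).Adj (L i) (F j))
            (adjR (by nofun) rfl : (GS m Sa Sb).Adj (F j) (T' j))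
            ((adjR (by nofun) rfl : (GS m Sa Sb).Adj (F' j) (T' j)).symm)
  | x1 => exact le_trans (dist_le1 (adjR (by nofun) trivial)) (by norm_num)
  | x2 =>
      exact le_trans (dist_le2 (adjR (by nofun) trivial : (GS m Sa Sb).Adj (L i) x1)
        (adjR (by nofun) trivial : (GS m Sa Sb).Adj x1 x2)) (by norm_num)
  | x3 =>
      exact dist_le3 (adjR (by nofun) trivial : (GS m Sa Sb).Adj (L i) x1)
        (adjR (by nofun) trivial : (GS m Sa Sb).Adj x1 x2)
        (adjR (by nofun) trivial : (GS m Sa Sb).Adj x2 x3)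

end

section
variable {m : ℕ} {Sa Sb : Fin (2 ^ m) → Bool}
open V SimpleGraph

lemma le_ecc (u v : V m) : (GS m Sa Sb).dist u v ≤ ecc m Sa Sb u := by
  unfold ecc; exact Finset.le_sup (Finset.mem_univ v)

lemma ecc_L_le {i : Fin (2 ^ m)} (ha : Sa i = true) (hb : Sb i = true) :
    ecc m Sa Sb (L i) ≤ 3 := by
  unfold ecc; exact Finset.sup_le fun v _ => dist_L_le ha hb v

lemma three_le_ecc (u : V m) : 3 ≤ ecc m Sa Sb u := by
  have h1 := dist_lip (Sa := Sa) (Sb := Sb) f1 f1_lip (reach u x3)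
  have h2 := dist_lip (Sa := Sa) (Sb := Sb) f2 f2_lip (reach u rk)
  have e1 := le_ecc (Sa := Sa) (Sb := Sb) u x3
  have e2 := le_ecc (Sa := Sa) (Sb := Sb) u rk
  cases u <;> simp only [f1, f2] at h1 h2 <;> omega

lemma four_le_ecc (hn : ¬ ∃ i : Fin (2 ^ m), Sa i = true ∧ Sb i = true) (u : V m) :
    4 ≤ ecc m Sa Sb u := by
  have h1 := dist_lip (Sa := Sa) (Sb := Sb) f1 f1_lip (reach u x3)
  have h2 := dist_lip (Sa := Sa) (Sb := Sb) f2 f2_lip (reach u rk)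
  have e1 := le_ecc (Sa := Sa) (Sb := Sb) u x3
  have e2 := le_ecc (Sa := Sa) (Sb := Sb) u rk
  cases u
  case L i =>
    have hni : ¬(Sa i = true ∧ Sb i = true) := fun h => hn ⟨i, h⟩
    have h3 := dist_lip (f3 i (Sb i)) (f3_lip i hni) (reach (L i) (R i))
    have e3 := le_ecc (Sa := Sa) (Sb := Sb) (V.L i) (V.R i)
    simp [f3] at h3
    omega
  all_goals simp only [f1, f2] at h1 h2 <;> omega

end

theorem statement11 (m : ℕ) (hm : 1 ≤ m) (Sa Sb : Fin (2 ^ m) → Bool) :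
    (radius m Sa Sb = 3 ↔ (∃ i : Fin (2 ^ m), Sa i = true ∧ Sb i = true)) ∧
    ((¬ ∃ i : Fin (2 ^ m), Sa i = true ∧ Sb i = true) → 4 ≤ radius m Sa Sb) := by
  have hge4 : (¬ ∃ i : Fin (2 ^ m), Sa i = true ∧ Sb i = true) → 4 ≤ radius m Sa Sb := by
    intro hn
    unfold radius
    exact Finset.le_inf' _ _ fun u _ => four_le_ecc hn u
  refine ⟨⟨fun h3 => ?_, fun h => ?_⟩, hge4⟩
  · by_contra hn
    have := hge4 hn
    omega
  · obtain ⟨i, ha, hb⟩ := h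
    have hle : radius m Sa Sb ≤ 3 := by
      unfold radius
      exact le_trans (Finset.inf'_le _ (Finset.mem_univ (V.L i))) (ecc_L_le ha hb)
    have hge : 3 ≤ radius m Sa Sb := by
      unfold radius
      exact Finset.le_inf' _ _ fun u _ => three_le_ecc u
    omega

end RadGadget
end
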